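/- arXiv:1204.0644 — 6 statements merged into one kernel-verified Lean document; each statement's English description precedes it below -/
import Mathlib

section
/- Let G = (V, E) be a graph and let v ∈ V. If every minimum-weight Roman dominating function f on G satisfies f(v) = 0, then γ_R(G − v) = γ_R(G). -/
open Finset
open scoped Classical

/-- `S` is a dominating set of `G`: every vertex outside `S` has a neighbor in `S`. -/
def IsDomSet {α : Type*} (G : SimpleGraph α) (S : Set α) : Prop :=
  ∀ v ∉ S, ∃ u ∈ S, G.Adj u v

/-- The domination number `γ(G)`. -/
noncomputable def domNum {α : Type*} (G : SimpleGraph α) [Fintype α] : ℕ :=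
  sInf {k | ∃ S : Finset α, IsDomSet G ↑S ∧ S.card = k}

/-- The rooted product `G ∘ H` with root `v` of `H`: one copy of `H` for each vertex of `G`,
identifying the root of the `a`-th copy with the vertex `a` of `G`. -/
def rootedProd {α β : Type*} (G : SimpleGraph α) (H : SimpleGraph β) (v : β) :
    SimpleGraph (α × β) where
  Adj x y := (x.2 = v ∧ y.2 = v ∧ G.Adj x.1 y.1) ∨ (x.1 = y.1 ∧ H.Adj x.2 y.2)
  symm := by
    constructor
    rintro x y (⟨h1, h2, h3⟩ | ⟨h1, h2⟩)
    · exact Or.inl ⟨h2, h1, h3.symm⟩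
    · exact Or.inr ⟨h1.symm, h2.symm⟩
  loopless := by
    constructor
    rintro x (⟨_, _, h⟩ | ⟨_, h⟩)
    · exact G.loopless.irrefl _ h
    · exact H.loopless.irrefl _ h

/-- The graph `G - v` obtained by deleting the vertex `v`. -/
def deleteVert {α : Type*} (G : SimpleGraph α) (v : α) : SimpleGraph {u : α // u ≠ v} :=
  SimpleGraph.comap Subtype.val G

/-- The graph `G - A` obtained by deleting a set `A` of vertices. -/
def deleteSet {α : Type*} (G : SimpleGraph α) (A : Set α) : SimpleGraph {u : α // u ∉ A} :=
  SimpleGraph.comap Subtype.val G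

/-- `f` is a Roman dominating function on `G`. -/
def IsRDF {α : Type*} (G : SimpleGraph α) (f : α → ℕ) : Prop :=
  (∀ u, f u ≤ 2) ∧ ∀ u, f u = 0 → ∃ w, G.Adj u w ∧ f w = 2

/-- The Roman domination number `γ_R(G)`. -/
noncomputable def romanDomNum {α : Type*} (G : SimpleGraph α) [Fintype α] : ℕ :=
  sInf {k | ∃ f : α → ℕ, IsRDF G f ∧ ∑ u, f u = k}

/-- `S` is an independent set of `G`. -/
def IsIndep {α : Type*} (G : SimpleGraph α) (S : Set α) : Prop :=
  ∀ u ∈ S, ∀ w ∈ S, ¬ G.Adj u w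

/-- The independence number `α(G)`. -/
noncomputable def indepNum {α : Type*} (G : SimpleGraph α) [Fintype α] : ℕ :=
  sSup {k | ∃ S : Finset α, IsIndep G ↑S ∧ S.card = k}

/-- The independent domination number `i(G)`. -/
noncomputable def indepDomNum {α : Type*} (G : SimpleGraph α) [Fintype α] : ℕ :=
  sInf {k | ∃ S : Finset α, IsDomSet G ↑S ∧ IsIndep G ↑S ∧ S.card = k}

/-- `S` is a connected dominating set of `G`. -/
def IsConnDomSet {α : Type*} (G : SimpleGraph α) (S : Set α) : Prop :=
  IsDomSet G S ∧ (G.induce S).Connected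

/-- The connected domination number `γ_c(G)`. -/
noncomputable def connDomNum {α : Type*} (G : SimpleGraph α) [Fintype α] : ℕ :=
  sInf {k | ∃ S : Finset α, IsConnDomSet G ↑S ∧ S.card = k}

/-- `D` is a super dominating set of `G`: every `w ∉ D` has a neighbor `u ∈ D` with
`N(u) ⊆ D ∪ {w}`. -/
def IsSuperDomSet {α : Type*} (G : SimpleGraph α) (D : Set α) : Prop :=
  ∀ w ∉ D, ∃ u ∈ D, G.Adj u w ∧ ∀ x, G.Adj u x → x ∈ D ∪ {w}

/-- The super domination number `γ_sp(G)`. -/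
noncomputable def superDomNum {α : Type*} (G : SimpleGraph α) [Fintype α] : ℕ :=
  sInf {k | ∃ S : Finset α, IsSuperDomSet G ↑S ∧ S.card = k}

/-- The number of end vertices (vertices of degree one) of `G`, denoted `n₁(G)`. -/
noncomputable def endVertCount {α : Type*} (G : SimpleGraph α) [Fintype α] : ℕ :=
  Nat.card {u : α // G.degree u = 1}

/- A γ_R-function `f` of `G` with `f v = 0` restricts to a Roman dominating function
of `G − v` (no vertex relied on `v` for domination), so `γ_R(G − v) ≤ γ_R(G)`. Conversely any
Roman dominating function of `G − v`, extended by `1` at `v`, is one of `G`, so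
`γ_R(G) ≤ γ_R(G − v) + 1`; if `γ_R(G − v) < γ_R(G)`, this extension would be a γ_R-function of
`G` that is nonzero at `v`. -/

section RomanDomination

variable {α : Type*} [Fintype α] (G : SimpleGraph α)

lemma romanDomNum_le_sum {f : α → ℕ} (hf : IsRDF G f) : romanDomNum G ≤ ∑ u, f u :=
  Nat.sInf_le ⟨f, hf, rfl⟩

lemma exists_isRDF_sum_eq_romanDomNum : ∃ f : α → ℕ, IsRDF G f ∧ ∑ u, f u = romanDomNum G :=
  have h_one : IsRDF G (fun _ => 1) :=
    And.intro (fun _ => one_le_two) (fun _ h => absurd h one_ne_zero)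
  Nat.sInf_mem (s := {k | ∃ f : α → ℕ, IsRDF G f ∧ ∑ u, f u = k}) ⟨_, _, h_one, rfl⟩

end RomanDomination

section DeleteVert

variable {α : Type*} {G : SimpleGraph α} {v : α}

lemma IsRDF.restrict_deleteVert {f : α → ℕ} (hf : IsRDF G f) (hfv : f v ≠ 2) :
    IsRDF (deleteVert G v) (fun u => f u) := by
  refine ⟨fun u => hf.1 u, fun u hu => ?_⟩
  obtain ⟨w, hadj, hw⟩ := hf.2 u hu
  have hwv : w ≠ v := by rintro rfl; exact hfv hw
  exact ⟨⟨w, hwv⟩, hadj, hw⟩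

lemma IsRDF.exists_extend_one [Fintype α] {g : {u : α // u ≠ v} → ℕ}
    (hg : IsRDF (deleteVert G v) g) :
    ∃ f : α → ℕ, IsRDF G f ∧ f v = 1 ∧ ∑ u, f u = ∑ u, g u + 1 := by
  let f : α → ℕ := fun u => if h : u = v then 1 else g ⟨u, h⟩
  have hfv : f v = 1 := dif_pos rfl
  have hf_ne (u : {u : α // u ≠ v}) : f u = g u := dif_neg u.2
  refine ⟨f, ⟨fun u => ?_, fun u hu => ?_⟩, hfv, ?_⟩
  · by_cases h : u = v
    · simp [f, h]
    · exact (hf_ne ⟨u, h⟩).trans_le (hg.1 _)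
  · have h : u ≠ v := by rintro rfl; simp [hfv] at hu
    obtain ⟨w, hadj, hw⟩ := hg.2 ⟨u, h⟩ ((hf_ne ⟨u, h⟩).symm.trans hu)
    exact ⟨w, hadj, (hf_ne w).trans hw⟩
  · rw [Fintype.sum_eq_add_sum_subtype_ne f v, hfv, add_comm]
    simp only [hf_ne]

lemma romanDomNum_deleteVert_add_le [Fintype α] {f : α → ℕ} (hf : IsRDF G f) (hfv : f v ≠ 2) :
    romanDomNum (deleteVert G v) + f v ≤ ∑ u, f u := by
  rw [Fintype.sum_eq_add_sum_subtype_ne f v, add_comm (f v)]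
  exact Nat.add_le_add_right (romanDomNum_le_sum _ (hf.restrict_deleteVert hfv)) _

end DeleteVert

/-- if every minimum Roman dominating function of `G` assigns `0` to `v`, then
`γ_R(G − v) = γ_R(G)`. -/
theorem stmt3 {α : Type*} [Fintype α] (G : SimpleGraph α) (v : α)
    (hv : ∀ f : α → ℕ, IsRDF G f → ∑ u, f u = romanDomNum G → f v = 0) :
    romanDomNum (deleteVert G v) = romanDomNum G := by
  obtain ⟨f, hf, hf_sum⟩ := exists_isRDF_sum_eq_romanDomNum G
  have hfv : f v = 0 := hv f hf hf_sum
  have h_le : romanDomNum (deleteVert G v) ≤ romanDomNum G := by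
    simpa [hfv, hf_sum] using romanDomNum_deleteVert_add_le (v := v) hf (by omega)
  obtain ⟨g, hg, hg_sum⟩ := exists_isRDF_sum_eq_romanDomNum (deleteVert G v)
  obtain ⟨f', hf', hf'v, hf'_sum⟩ := IsRDF.exists_extend_one hg
  have h_le_succ : romanDomNum G ≤ romanDomNum (deleteVert G v) + 1 := by
    simpa [hf'_sum, hg_sum] using romanDomNum_le_sum G hf'
  by_contra h_ne
  have hf'_min : ∑ u, f' u = romanDomNum G := by omega
  simp [hv f' hf' hf'_min] at hf'v
end

section
/- Let G be a graph of order n ≥ 2 and let H be a graph with root vertex v and at least two vertices. If there exist two minimum-weight Roman dominating functions h and h' on H such that h(v) = 1 and h'(v) = 2, then γ_R(G∘H) = n·(γ_R(H) − 1) + γ(G). -/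
open Finset
open scoped Classical

/-!
In a Roman dominating function of `G ∘ H`, each copy of `H` weighs at least `γ_R(H) - 1`, since
raising its root to weight 1 makes it a Roman dominating function of `H`; it weighs at least
`γ_R(H)` unless its root has weight 0 and is defended from the root of a neighbouring copy. So the
copies of weight at least `γ_R(H)` dominate `G`, which gives the lower bound. For the upper bound,
take a minimum dominating set `S` of `G`, put `h'` on the copies over `S` and `h` with its root
weight 1 removed on the others: the removed roots are defended by the roots of weight 2 over `S`.
-/

section Finite

variable {ι : Type*} [Fintype ι]

lemma sum_update_add_self {M : Type*} [AddCommMonoid M] (g : ι → M) (i : ι) (b : M) :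
    ∑ x, Function.update g i b x + g i = ∑ x, g x + b := by
  rw [sum_update_of_mem (mem_univ i), sum_eq_add_sum_sdiff_singleton_of_mem (mem_univ i) g]
  abel

lemma sum_const_add_ite_mem (s : Finset ι) (k : ℕ) :
    ∑ i, (k + if i ∈ s then 1 else 0) = Fintype.card ι * k + #s := by
  simp [sum_add_distrib]

end Finite

section Domination

variable {α : Type*} [Fintype α] {G : SimpleGraph α}

lemma domNum_le_card {S : Finset α} (hS : IsDomSet G ↑S) : domNum G ≤ #S :=
  Nat.sInf_le ⟨S, hS, rfl⟩

lemma exists_isDomSet_card_eq_domNum (G : SimpleGraph α) :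
    ∃ S : Finset α, IsDomSet G ↑S ∧ #S = domNum G :=
  Nat.sInf_mem (s := {k | ∃ S : Finset α, IsDomSet G ↑S ∧ #S = k})
    ⟨_, univ, fun a ha => absurd (mem_coe.2 (mem_univ a)) ha, rfl⟩

end Domination

section RomanDomination

variable {β : Type*} {H : SimpleGraph β} {v : β} {g : β → ℕ}

lemma romanDomNum_le_sum_s6 [Fintype β] (hg : IsRDF H g) : romanDomNum H ≤ ∑ u, g u :=
  Nat.sInf_le ⟨g, hg, rfl⟩

lemma exists_isRDF_sum_eq_romanDomNum_s6 [Fintype β] (H : SimpleGraph β) :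
    ∃ g : β → ℕ, IsRDF H g ∧ ∑ u, g u = romanDomNum H :=
  Nat.sInf_mem (s := {k | ∃ g : β → ℕ, IsRDF H g ∧ ∑ u, g u = k})
    ⟨_, fun _ => 2, ⟨fun _ => le_rfl, fun _ h => absurd h two_ne_zero⟩, rfl⟩

lemma romanDomNum_pos [Fintype β] (v : β) : 0 < romanDomNum H := by
  obtain ⟨g, hg, hsum⟩ := exists_isRDF_sum_eq_romanDomNum_s6 H
  rw [← hsum]
  by_cases hv : g v = 0
  · obtain ⟨w, -, hw⟩ := hg.2 v hv
    exact lt_of_lt_of_le (by omega) (single_le_sum (fun _ _ => Nat.zero_le _) (mem_univ w))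
  · exact lt_of_lt_of_le (by omega) (single_le_sum (fun _ _ => Nat.zero_le _) (mem_univ v))

lemma isRDF_of_defended_off_root (hle : ∀ u, g u ≤ 2)
    (hdef : ∀ u ≠ v, g u = 0 → ∃ w, H.Adj u w ∧ g w = 2)
    (hv : g v = 0 → ∃ w, H.Adj v w ∧ g w = 2) : IsRDF H g :=
  ⟨hle, fun u hu => (eq_or_ne u v).elim (fun h => h ▸ hv (h ▸ hu)) (fun h => hdef u h hu)⟩

lemma romanDomNum_le_sum_add_one_of_defended_off_root [Fintype β] (hle : ∀ u, g u ≤ 2)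
    (hdef : ∀ u ≠ v, g u = 0 → ∃ w, H.Adj u w ∧ g w = 2) : romanDomNum H ≤ ∑ u, g u + 1 := by
  set g' := Function.update g v (max 1 (g v))
  have hg' : IsRDF H g' := by
    refine isRDF_of_defended_off_root (v := v) (fun u => ?_) (fun u hu h0 => ?_) (fun h0 => ?_)
    · rcases eq_or_ne u v with rfl | hu
      · simpa [g'] using hle u
      · simpa [g', hu] using hle u
    · obtain ⟨w, hw, hw2⟩ := hdef u hu (by simpa [g', hu] using h0)
      refine ⟨w, hw, ?_⟩
      rcases eq_or_ne w v with rfl | hwv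
      · simp [g', hw2]
      · simpa [g', hwv] using hw2
    · simp [g'] at h0
  have hsum : ∑ u, g' u + g v = ∑ u, g u + max 1 (g v) := sum_update_add_self g v _
  have := romanDomNum_le_sum_s6 hg'
  omega

end RomanDomination

section RootedProduct

variable {α β : Type*} {G : SimpleGraph α} {H : SimpleGraph β} {v : β}

lemma rootedProd_adj_of_ne_root {a b : α} {u w : β} (hu : u ≠ v)
    (h : (rootedProd G H v).Adj (a, u) (b, w)) : b = a ∧ H.Adj u w := by
  rcases h with ⟨h, -, -⟩ | ⟨h, hadj⟩
  · exact absurd h hu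
  · exact ⟨h.symm, hadj⟩

namespace IsRDF

variable {f : α × β → ℕ}

lemma row_defended_off_root (hf : IsRDF (rootedProd G H v) f) (a : α) :
    ∀ u ≠ v, f (a, u) = 0 → ∃ w, H.Adj u w ∧ f (a, w) = 2 := by
  intro u hu h0
  obtain ⟨⟨b, w⟩, hadj, hw⟩ := hf.2 _ h0
  obtain ⟨rfl, huw⟩ := rootedProd_adj_of_ne_root hu hadj
  exact ⟨w, huw, hw⟩

variable [Fintype β]

lemma romanDomNum_le_rowSum_add_one (hf : IsRDF (rootedProd G H v) f) (a : α) :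
    romanDomNum H ≤ ∑ u, f (a, u) + 1 :=
  romanDomNum_le_sum_add_one_of_defended_off_root (fun _ => hf.1 _) (hf.row_defended_off_root a)

lemma romanDomNum_le_rowSum (hf : IsRDF (rootedProd G H v) f) {a : α}
    (hroot : f (a, v) = 0 → ∃ w, H.Adj v w ∧ f (a, w) = 2) :
    romanDomNum H ≤ ∑ u, f (a, u) :=
  romanDomNum_le_sum_s6 (isRDF_of_defended_off_root (fun _ => hf.1 _) (hf.row_defended_off_root a) hroot)

/-- The root of a light copy (weight below `γ_R(H)`) has weight 0 and is defended from outside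
the copy, by a root of weight 2, whose copy is therefore heavy. -/
lemma isDomSet_heavyRows (hf : IsRDF (rootedProd G H v) f) [Fintype α] :
    IsDomSet G ↑(univ.filter fun a => romanDomNum H ≤ ∑ u, f (a, u)) := by
  intro a ha
  simp only [coe_filter, mem_univ, true_and, Set.mem_ofPred_eq] at ha ⊢
  have h0 : f (a, v) = 0 := by
    by_contra h
    exact ha (hf.romanDomNum_le_rowSum fun h' => absurd h' h)
  obtain ⟨⟨b, w⟩, hadj, hw⟩ := hf.2 _ h0
  rcases hadj with ⟨-, rfl, hab⟩ | ⟨rfl, hvw⟩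
  · exact ⟨b, hf.romanDomNum_le_rowSum fun h => by simp_all, hab.symm⟩
  · exact absurd (hf.romanDomNum_le_rowSum fun _ => ⟨w, hvw, hw⟩) ha

end IsRDF

theorem card_mul_romanDomNum_sub_one_add_domNum_le [Fintype α] [Fintype β]
    (G : SimpleGraph α) (H : SimpleGraph β) (v : β) :
    Fintype.card α * (romanDomNum H - 1) + domNum G ≤ romanDomNum (rootedProd G H v) := by
  obtain ⟨f, hf, hsum⟩ := exists_isRDF_sum_eq_romanDomNum_s6 (rootedProd G H v)
  have hpos : 0 < romanDomNum H := romanDomNum_pos v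
  set D := univ.filter fun a => romanDomNum H ≤ ∑ u, f (a, u)
  calc Fintype.card α * (romanDomNum H - 1) + domNum G
      ≤ Fintype.card α * (romanDomNum H - 1) + #D := by
        gcongr
        exact domNum_le_card hf.isDomSet_heavyRows
    _ = ∑ a, (romanDomNum H - 1 + if a ∈ D then 1 else 0) := (sum_const_add_ite_mem D _).symm
    _ ≤ ∑ a, ∑ u, f (a, u) := sum_le_sum fun a _ => by
        have := hf.romanDomNum_le_rowSum_add_one a
        split_ifs with ha
        · have := (mem_filter.1 ha).2
          omega
        · omega
    _ = romanDomNum (rootedProd G H v) := by rw [← Fintype.sum_prod_type f, hsum]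

noncomputable def rootedGlue (S : Finset α) (v : β) (h h' : β → ℕ) : α × β → ℕ :=
  fun p => if p.1 ∈ S then h' p.2 else Function.update h v 0 p.2

variable {S : Finset α} {h h' : β → ℕ}

lemma isRDF_rootedGlue (hS : IsDomSet G ↑S) (hh : IsRDF H h) (hh1 : h v = 1)
    (hh' : IsRDF H h') (hh2 : h' v = 2) : IsRDF (rootedProd G H v) (rootedGlue S v h h') := by
  refine ⟨fun ⟨a, u⟩ => ?_, fun ⟨a, u⟩ h0 => ?_⟩
  · by_cases ha : a ∈ S
    · simpa [rootedGlue, ha] using hh'.1 u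
    · rcases eq_or_ne u v with rfl | hu
      · simp [rootedGlue, ha]
      · simpa [rootedGlue, ha, hu] using hh.1 u
  by_cases ha : a ∈ S
  · obtain ⟨w, hw, hw2⟩ := hh'.2 u (by simpa [rootedGlue, ha] using h0)
    exact ⟨(a, w), Or.inr ⟨rfl, hw⟩, by simp [rootedGlue, ha, hw2]⟩
  rcases eq_or_ne u v with rfl | hu
  · obtain ⟨b, hb, hab⟩ := hS a ha
    exact ⟨(b, u), Or.inl ⟨rfl, rfl, hab.symm⟩, by simp [rootedGlue, mem_coe.1 hb, hh2]⟩
  · obtain ⟨w, hw, hw2⟩ := hh.2 u (by simpa [rootedGlue, ha, hu] using h0)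
    have hwv : w ≠ v := by rintro rfl; omega
    exact ⟨(a, w), Or.inr ⟨rfl, hw⟩, by simp [rootedGlue, ha, hwv, hw2]⟩

theorem romanDomNum_rootedProd_le_of_isDomSet [Fintype α] [Fintype β] (hS : IsDomSet G ↑S)
    (hh : IsRDF H h) (hhmin : ∑ u, h u = romanDomNum H) (hh1 : h v = 1)
    (hh' : IsRDF H h') (hh'min : ∑ u, h' u = romanDomNum H) (hh2 : h' v = 2) :
    romanDomNum (rootedProd G H v) ≤ Fintype.card α * (romanDomNum H - 1) + #S := by
  have hpos : 0 < romanDomNum H := romanDomNum_pos v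
  calc romanDomNum (rootedProd G H v)
      ≤ ∑ p, rootedGlue S v h h' p := romanDomNum_le_sum_s6 (isRDF_rootedGlue hS hh hh1 hh' hh2)
    _ = ∑ a, ∑ u, rootedGlue S v h h' (a, u) := Fintype.sum_prod_type _
    _ = ∑ a, (romanDomNum H - 1 + if a ∈ S then 1 else 0) := sum_congr rfl fun a _ => by
        by_cases ha : a ∈ S
        · simp only [rootedGlue, ha, if_true, hh'min]
          omega
        · have := sum_update_add_self h v 0
          simp only [rootedGlue, ha, if_false]
          omega
    _ = Fintype.card α * (romanDomNum H - 1) + #S := sum_const_add_ite_mem S _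

end RootedProduct

theorem stmt6_general {α β : Type*} [Fintype α] [Fintype β]
    (G : SimpleGraph α) (H : SimpleGraph β) (v : β)
    (h : β → ℕ) (hh : IsRDF H h) (hhmin : ∑ u, h u = romanDomNum H) (hh1 : h v = 1)
    (h' : β → ℕ) (hh' : IsRDF H h') (hh'min : ∑ u, h' u = romanDomNum H) (hh2 : h' v = 2) :
    romanDomNum (rootedProd G H v) =
      Fintype.card α * (romanDomNum H - 1) + domNum G := by
  obtain ⟨S, hS, hcard⟩ := exists_isDomSet_card_eq_domNum G
  refine le_antisymm ?_ (card_mul_romanDomNum_sub_one_add_domNum_le G H v)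
  rw [← hcard]
  exact romanDomNum_rootedProd_le_of_isDomSet hS hh hhmin hh1 hh' hh'min hh2

/-- if there are minimum Roman dominating functions `h, h'` of `H` with
`h(v) = 1` and `h'(v) = 2`, then `γ_R(G∘H) = n·(γ_R(H) − 1) + γ(G)`. -/
theorem stmt6 {α β : Type*} [Fintype α] [Fintype β]
    (G : SimpleGraph α) (H : SimpleGraph β) (v : β)
    (hn : 2 ≤ Fintype.card α) (hm : 2 ≤ Fintype.card β)
    (h : β → ℕ) (hh : IsRDF H h) (hhmin : ∑ u, h u = romanDomNum H) (hh1 : h v = 1)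
    (h' : β → ℕ) (hh' : IsRDF H h') (hh'min : ∑ u, h' u = romanDomNum H) (hh2 : h' v = 2) :
    romanDomNum (rootedProd G H v) =
      Fintype.card α * (romanDomNum H - 1) + domNum G :=
  stmt6_general G H v h hh hhmin hh1 h' hh' hh'min hh2
end

section
/- Let G be a graph of order n ≥ 2 and let H be a graph with root vertex v and at least two vertices. If the root v belongs to every maximum independent set of H, then α(G∘H) = n·(α(H) − 1) + α(G). -/
open Finset
open scoped Classical

/-! An independent set of `G ∘ H` meets each copy of `H` in an independent set of `H`, which
has fewer than `α(H)` vertices unless it contains the root, and the copies whose root it contains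
form an independent set of `G`. Conversely, a maximum independent set of `H` (which contains `v`)
minus `v`, placed in every copy, together with a maximum independent set of `G` on the roots, is
independent and attains the bound. -/

section

variable {α β : Type*}

lemma card_le_indepNum [Fintype α] (G : SimpleGraph α) {S : Finset α} (hS : IsIndep G ↑S) :
    #S ≤ indepNum G :=
  le_csSup ⟨Fintype.card α, by rintro k ⟨T, -, rfl⟩; exact T.card_le_univ⟩ ⟨S, hS, rfl⟩

lemma exists_isIndep_card_eq_indepNum [Fintype α] (G : SimpleGraph α) :
    ∃ S : Finset α, IsIndep G ↑S ∧ #S = indepNum G :=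
  Nat.sSup_mem (s := {k | ∃ S : Finset α, IsIndep G ↑S ∧ #S = k})
    ⟨0, ∅, by simp [IsIndep], card_empty⟩
    ⟨Fintype.card α, by rintro k ⟨T, -, rfl⟩; exact T.card_le_univ⟩

lemma card_lt_indepNum_of_notMem [Fintype β] {H : SimpleGraph β} {v : β}
    (hv : ∀ S : Finset β, IsIndep H ↑S → #S = indepNum H → v ∈ S)
    {S : Finset β} (hS : IsIndep H ↑S) (hvS : v ∉ S) : #S < indepNum H :=
  (card_le_indepNum H hS).lt_of_ne fun h => hvS (hv S hS h)

noncomputable def fiber [Fintype β] (S : Finset (α × β)) (a : α) : Finset β :=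
  {b | (a, b) ∈ S}

lemma card_eq_sum_card_fiber [Fintype α] [Fintype β] (S : Finset (α × β)) :
    #S = ∑ a, #(fiber S a) := by
  rw [← filter_univ_mem S, card_filter, Fintype.sum_prod_type]
  simp only [fiber, card_filter, mem_filter_univ]

namespace rootedProd

variable {G : SimpleGraph α} {H : SimpleGraph β} {v : β} {S : Finset (α × β)}

lemma isIndep_fiber [Fintype β] (hS : IsIndep (rootedProd G H v) ↑S) (a : α) :
    IsIndep H ↑(fiber S a) := by
  intro b hb c hc hbc
  simp only [fiber, mem_coe, mem_filter_univ] at hb hc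
  exact hS _ hb _ hc (Or.inr ⟨rfl, hbc⟩)

lemma isIndep_root [Fintype α] (hS : IsIndep (rootedProd G H v) ↑S) :
    IsIndep G ↑({a | (a, v) ∈ S} : Finset α) := by
  intro a ha b hb hab
  simp only [mem_coe, mem_filter_univ] at ha hb
  exact hS _ ha _ hb (Or.inl ⟨rfl, rfl, hab⟩)

lemma card_fiber_le [Fintype β]
    (hv : ∀ S : Finset β, IsIndep H ↑S → #S = indepNum H → v ∈ S)
    (hS : IsIndep (rootedProd G H v) ↑S) (a : α) :
    #(fiber S a) ≤ (indepNum H - 1) + if (a, v) ∈ S then 1 else 0 := by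
  split_ifs with hav
  · have := card_le_indepNum H (isIndep_fiber hS a)
    omega
  · have := card_lt_indepNum_of_notMem hv (isIndep_fiber hS a) (by simpa [fiber] using hav)
    omega

theorem indepNum_le [Fintype α] [Fintype β]
    (hv : ∀ S : Finset β, IsIndep H ↑S → #S = indepNum H → v ∈ S) :
    indepNum (rootedProd G H v) ≤ Fintype.card α * (indepNum H - 1) + indepNum G := by
  obtain ⟨S, hS, hcard⟩ := exists_isIndep_card_eq_indepNum (rootedProd G H v)
  calc indepNum (rootedProd G H v) = ∑ a, #(fiber S a) := by
        rw [← hcard, card_eq_sum_card_fiber]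
    _ ≤ ∑ a, ((indepNum H - 1) + if (a, v) ∈ S then 1 else 0) :=
        sum_le_sum fun a _ => card_fiber_le hv hS a
    _ = Fintype.card α * (indepNum H - 1) + #({a | (a, v) ∈ S} : Finset α) := by
        rw [sum_add_distrib, sum_const, card_univ, smul_eq_mul, sum_boole, Nat.cast_id]
    _ ≤ Fintype.card α * (indepNum H - 1) + indepNum G := by
        gcongr
        exact card_le_indepNum G (isIndep_root hS)

lemma isIndep_univ_prod_erase_union_prod_singleton [Fintype α] {SG : Finset α} {SH : Finset β}
    (hSG : IsIndep G ↑SG) (hSH : IsIndep H ↑SH) (hvSH : v ∈ SH) :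
    IsIndep (rootedProd G H v) ↑(univ ×ˢ SH.erase v ∪ SG ×ˢ {v}) := by
  have hmem : ∀ x : α × β, x ∈ univ ×ˢ SH.erase v ∪ SG ×ˢ {v} ↔
      (x.2 ≠ v ∧ x.2 ∈ SH) ∨ (x.1 ∈ SG ∧ x.2 = v) := by
    simp [eq_comm]
  rintro ⟨a, b⟩ hx ⟨c, d⟩ hy (⟨rfl, rfl, hac⟩ | ⟨-, hbd⟩)
  all_goals simp only [mem_coe, hmem] at hx hy
  · exact hSG a (by simpa using hx) c (by simpa using hy) hac
  · exact hSH b (hx.elim (·.2) (·.2 ▸ hvSH)) d (hy.elim (·.2) (·.2 ▸ hvSH)) hbd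

theorem le_indepNum [Fintype α] [Fintype β] {SG : Finset α} {SH : Finset β}
    (hSG : IsIndep G ↑SG) (hSH : IsIndep H ↑SH) (hvSH : v ∈ SH) :
    Fintype.card α * (#SH - 1) + #SG ≤ indepNum (rootedProd G H v) := by
  have hdisj : Disjoint (univ ×ˢ SH.erase v) (SG ×ˢ {v}) :=
    disjoint_product.2 (Or.inr (disjoint_singleton_right.2 (notMem_erase v SH)))
  calc Fintype.card α * (#SH - 1) + #SG = #(univ ×ˢ SH.erase v ∪ SG ×ˢ {v}) := by
        rw [card_union_of_disjoint hdisj, card_product, card_product, card_erase_of_mem hvSH,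
          card_univ, card_singleton, mul_one]
    _ ≤ indepNum (rootedProd G H v) :=
        card_le_indepNum _ (isIndep_univ_prod_erase_union_prod_singleton hSG hSH hvSH)

end rootedProd

end

theorem stmt10_general {α β : Type*} [Fintype α] [Fintype β]
    (G : SimpleGraph α) (H : SimpleGraph β) (v : β)
    (hv : ∀ S : Finset β, IsIndep H ↑S → S.card = indepNum H → v ∈ S) :
    indepNum (rootedProd G H v) = Fintype.card α * (indepNum H - 1) + indepNum G := by
  obtain ⟨SG, hSG, hSGcard⟩ := exists_isIndep_card_eq_indepNum G
  obtain ⟨SH, hSH, hSHcard⟩ := exists_isIndep_card_eq_indepNum H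
  refine le_antisymm (rootedProd.indepNum_le hv) ?_
  simpa only [hSGcard, hSHcard] using rootedProd.le_indepNum hSG hSH (hv SH hSH hSHcard)

/-- if the root `v` belongs to every maximum independent set of `H`, then
`α(G∘H) = n·(α(H) − 1) + α(G)`. -/
theorem stmt10 {α β : Type*} [Fintype α] [Fintype β]
    (G : SimpleGraph α) (H : SimpleGraph β) (v : β)
    (hn : 2 ≤ Fintype.card α) (hm : 2 ≤ Fintype.card β)
    (hv : ∀ S : Finset β, IsIndep H ↑S → S.card = indepNum H → v ∈ S) :
    indepNum (rootedProd G H v) = Fintype.card α * (indepNum H - 1) + indepNum G :=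
  stmt10_general G H v hv
end

section
/- Let G be a graph of order n ≥ 2 and let H be a graph with root vertex v and at least two vertices. Then n·(i(H) − 1) + i(G) ≤ i(G∘H) ≤ i(H)·α(G) + i(H − v)·(n − α(G)). -/
open Finset
open scoped Classical

/-!
Lower bound: an independent dominating set `S` of `G ∘ H` meets each copy of `H` in an
independent set dominating the copy except possibly its root, hence in at least `i(H) - 1`
vertices, and in at least `i(H)` when the root is dominated from inside the copy. The copies
of the second kind contain the copies whose root lies in `S`, an independent set of `G` that
dominates all the other copies, so there are at least `i(G)` of them.

Upper bound: take a maximum independent set `A` of `G` (it is dominating), put a minimum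
independent dominating set `D` of `H` into the copies over `A` and one, `W`, of `H - v` into
the others. Choosing `D` and `W` so that `v ∈ D` or `W` dominates `v` makes every root
dominated.
-/

section IndependentDomination

variable {γ : Type*} {K : SimpleGraph γ}

lemma IsIndep.insert_of_forall_not_adj {S : Set γ} {x : γ} (hS : IsIndep K S)
    (hx : ∀ w ∈ S, ¬ K.Adj x w) : IsIndep K (insert x S) := by
  rintro u (rfl | hu) w (rfl | hw) hadj
  · exact K.irrefl hadj
  · exact hx w hw hadj
  · exact hx u hu hadj.symm
  · exact hS u hu w hw hadj

lemma IsIndep.isDomSet_of_maximal {S : Set γ} (hS : IsIndep K S)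
    (hmax : ∀ x ∉ S, ¬ IsIndep K (insert x S)) : IsDomSet K S := by
  intro x hx
  by_contra! hcon
  exact hmax x hx (hS.insert_of_forall_not_adj fun w hw hadj => hcon w hw hadj.symm)

variable [Fintype γ]

lemma exists_isDomSet_isIndep_of_subset {R T : Finset γ} (hRT : R ⊆ T) (hR : IsIndep K R)
    (hout : ∀ x ∉ T, ∃ r ∈ R, K.Adj r x) :
    ∃ M ⊆ T, IsDomSet K M ∧ IsIndep K M := by
  obtain ⟨M, hM, hmax⟩ := exists_max_image
    (univ.filter fun M : Finset γ => R ⊆ M ∧ M ⊆ T ∧ IsIndep K M) card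
    ⟨R, by simpa using ⟨hRT, hR⟩⟩
  simp only [mem_filter, mem_univ, true_and] at hM
  obtain ⟨hRM, hMT, hMi⟩ := hM
  refine ⟨M, hMT, hMi.isDomSet_of_maximal fun x hx hxi => ?_, hMi⟩
  have hxM : x ∉ M := by simpa using hx
  by_cases hxT : x ∈ T
  · have hle := hmax (insert x M) (by
      simpa [insert_subset_iff, hxT, hMT] using ⟨hRM.trans (subset_insert x M), hxi⟩)
    rw [card_insert_of_notMem hxM] at hle
    omega
  · obtain ⟨r, hr, hadj⟩ := hout x hxT
    exact hxi x (Set.mem_insert x _) r (Set.mem_insert_of_mem x (hRM hr)) hadj.symm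

lemma indepDomNum_le_card {S : Finset γ} (hd : IsDomSet K S) (hi : IsIndep K S) :
    indepDomNum K ≤ S.card :=
  Nat.sInf_le ⟨S, hd, hi, rfl⟩

lemma indepDomNum_le_card_of_subset {R T : Finset γ} (hRT : R ⊆ T) (hR : IsIndep K R)
    (hout : ∀ x ∉ T, ∃ r ∈ R, K.Adj r x) : indepDomNum K ≤ T.card := by
  obtain ⟨M, hMT, hd, hi⟩ := exists_isDomSet_isIndep_of_subset hRT hR hout
  exact (indepDomNum_le_card hd hi).trans (card_le_card hMT)

lemma exists_isDomSet_isIndep_card_eq_indepDomNum (K : SimpleGraph γ) :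
    ∃ S : Finset γ, IsDomSet K S ∧ IsIndep K S ∧ S.card = indepDomNum K := by
  obtain ⟨S, -, hd, hi⟩ := exists_isDomSet_isIndep_of_subset (K := K) (empty_subset univ)
    (by simp [IsIndep]) (by simp)
  have hne : {k | ∃ S : Finset γ, IsDomSet K S ∧ IsIndep K S ∧ S.card = k}.Nonempty :=
    ⟨S.card, S, hd, hi, rfl⟩
  exact Nat.sInf_mem hne

lemma one_le_indepDomNum [Nonempty γ] (K : SimpleGraph γ) : 1 ≤ indepDomNum K := by
  obtain ⟨S, hd, -, hS⟩ := exists_isDomSet_isIndep_card_eq_indepDomNum K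
  rw [← hS, Nat.one_le_iff_ne_zero, Ne, card_eq_zero]
  rintro rfl
  obtain ⟨u, hu, -⟩ := hd (Classical.arbitrary γ) (by simp)
  simp at hu

lemma indepNum_bddAbove (K : SimpleGraph γ) :
    BddAbove {k | ∃ S : Finset γ, IsIndep K S ∧ S.card = k} :=
  ⟨Fintype.card γ, by rintro _ ⟨S, -, rfl⟩; exact card_le_univ S⟩

lemma card_le_indepNum_s13 {S : Finset γ} (h : IsIndep K S) : S.card ≤ indepNum K :=
  le_csSup (indepNum_bddAbove K) ⟨S, h, rfl⟩

lemma exists_isIndep_isDomSet_card_eq_indepNum (K : SimpleGraph γ) :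
    ∃ S : Finset γ, IsIndep K S ∧ IsDomSet K S ∧ S.card = indepNum K := by
  have hne : {k | ∃ S : Finset γ, IsIndep K S ∧ S.card = k}.Nonempty :=
    ⟨0, ∅, by simp [IsIndep], rfl⟩
  obtain ⟨S, hi, hS : S.card = indepNum K⟩ := Nat.sSup_mem hne (indepNum_bddAbove K)
  refine ⟨S, hi, hi.isDomSet_of_maximal fun x hx hxi => ?_, hS⟩
  have hle := card_le_indepNum_s13 (S := insert x S) (by simpa using hxi)
  rw [card_insert_of_notMem (by simpa using hx)] at hle
  omega

end IndependentDomination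

/-- Domination of `H - v` read inside `H`; it is also what a dominating set of `G ∘ H` induces
in every copy of `H`. -/
def IsDomSetExcept {β : Type*} (H : SimpleGraph β) (v : β) (W : Set β) : Prop :=
  ∀ u ∉ W, u ≠ v → ∃ w ∈ W, H.Adj w u

section RootVertex

variable {β : Type*} {H : SimpleGraph β} {v : β}

lemma IsDomSetExcept.isDomSet_insert {W : Set β} (hd : IsDomSetExcept H v W) :
    IsDomSet H (insert v W) := by
  intro u hu
  simp only [Set.mem_insert_iff, not_or] at hu
  obtain ⟨w, hw, hadj⟩ := hd u hu.2 hu.1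
  exact ⟨w, Set.mem_insert_of_mem v hw, hadj⟩

variable [Fintype β]

lemma indepDomNum_le_card_of_dominates_root {W : Finset β} (hi : IsIndep H W)
    (hd : IsDomSetExcept H v W) (hv : v ∈ W ∨ ∃ w ∈ W, H.Adj w v) :
    indepDomNum H ≤ W.card := by
  refine indepDomNum_le_card (fun u hu => ?_) hi
  by_cases huv : u = v
  · subst huv
    exact hv.resolve_left hu
  · exact hd u hu huv

lemma indepDomNum_le_card_add_one {W : Finset β} (hi : IsIndep H W)
    (hd : IsDomSetExcept H v W) : indepDomNum H ≤ W.card + 1 := by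
  by_cases hv : v ∈ W ∨ ∃ w ∈ W, H.Adj w v
  · exact (indepDomNum_le_card_of_dominates_root hi hd hv).trans (Nat.le_succ _)
  · push Not at hv
    rw [← card_insert_of_notMem hv.1]
    refine indepDomNum_le_card (by simpa using hd.isDomSet_insert) ?_
    simpa using hi.insert_of_forall_not_adj fun w hw hadj => hv.2 w hw hadj.symm

lemma indepDomNum_deleteVert_le {W : Finset β} (hvW : v ∉ W) (hi : IsIndep H W)
    (hd : IsDomSetExcept H v W) : indepDomNum (deleteVert H v) ≤ W.card := by
  have hcard : (W.subtype (· ≠ v)).card = W.card := by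
    rw [card_subtype, filter_true_of_mem fun x hx => ne_of_mem_of_not_mem hx hvW]
  rw [← hcard]
  refine indepDomNum_le_card (fun u hu => ?_)
    (fun x hx y hy => hi x (by simpa using hx) y (by simpa using hy))
  obtain ⟨w, hw, hadj⟩ := hd u (by simpa using hu) u.2
  exact ⟨⟨w, ne_of_mem_of_not_mem hw hvW⟩, by simpa using hw, hadj⟩

lemma exists_card_eq_indepDomNum_deleteVert (H : SimpleGraph β) (v : β) :
    ∃ W : Finset β, v ∉ W ∧ IsIndep H W ∧ IsDomSetExcept H v W ∧
      W.card = indepDomNum (deleteVert H v) := by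
  obtain ⟨W, hd, hi, hW⟩ := exists_isDomSet_isIndep_card_eq_indepDomNum (deleteVert H v)
  refine ⟨W.map (Function.Embedding.subtype _), by simp, ?_, fun u hu huv => ?_, by simpa⟩
  · simp only [coe_map, Function.Embedding.coe_subtype]
    rintro _ ⟨x, hx, rfl⟩ _ ⟨y, hy, rfl⟩
    exact hi x hx y hy
  · obtain ⟨w, hw, hadj⟩ := hd ⟨u, huv⟩ (fun h => hu (by simpa using ⟨huv, h⟩))
    exact ⟨w, mem_map_of_mem _ hw, hadj⟩

/-- If neither `D` nor `W` dominates `v`, then `W ∪ {v}` and `D` witness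
`i(H - v) ≤ i(H) ≤ i(H - v) + 1`, so one of them can replace the other. -/
lemma exists_minimal_pair_dominating_root (H : SimpleGraph β) (v : β) :
    ∃ D W : Finset β, IsDomSet H D ∧ IsIndep H D ∧ D.card = indepDomNum H ∧
      v ∉ W ∧ IsIndep H W ∧ IsDomSetExcept H v W ∧ W.card = indepDomNum (deleteVert H v) ∧
      (v ∈ D ∨ ∃ w ∈ W, H.Adj w v) := by
  obtain ⟨D, hDd, hDi, hD⟩ := exists_isDomSet_isIndep_card_eq_indepDomNum H
  obtain ⟨W, hvW, hWi, hWd, hW⟩ := exists_card_eq_indepDomNum_deleteVert H v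
  by_cases hv : v ∈ D ∨ ∃ w ∈ W, H.Adj w v
  · exact ⟨D, W, hDd, hDi, hD, hvW, hWi, hWd, hW, hv⟩
  push Not at hv
  obtain ⟨hvD, hvW'⟩ := hv
  have hDd' : IsDomSetExcept H v D := fun u hu _ => hDd u hu
  have hle : indepDomNum (deleteVert H v) ≤ indepDomNum H :=
    hD ▸ indepDomNum_deleteVert_le hvD hDi hDd'
  have hge : indepDomNum H ≤ indepDomNum (deleteVert H v) + 1 :=
    hW ▸ indepDomNum_le_card_add_one hWi hWd
  rcases hle.eq_or_lt with heq | hlt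
  · exact ⟨D, D, hDd, hDi, hD, hvD, hDi, hDd', hD.trans heq.symm, Or.inr (hDd v hvD)⟩
  · refine ⟨insert v W, W, by simpa using hWd.isDomSet_insert, ?_, ?_, hvW, hWi, hWd, hW,
      Or.inl (mem_insert_self v W)⟩
    · simpa using hWi.insert_of_forall_not_adj fun w hw hadj => hvW' w hw hadj.symm
    · rw [card_insert_of_notMem hvW]
      omega

end RootVertex

section RootedProduct

variable {α β : Type*} {G : SimpleGraph α} {H : SimpleGraph β} {v : β}

noncomputable def sliceAt (S : Finset (α × β)) (a : α) : Finset β :=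
  S.preimage (Prod.mk a) (Prod.mk_right_injective a).injOn

@[simp]
lemma mem_sliceAt {S : Finset (α × β)} {a : α} {u : β} : u ∈ sliceAt S a ↔ (a, u) ∈ S :=
  mem_preimage

lemma sum_card_sliceAt [Fintype α] (S : Finset (α × β)) :
    ∑ a, (sliceAt S a).card = S.card := by
  rw [card_eq_sum_card_fiberwise (fun p _ => mem_univ p.1)]
  refine sum_congr rfl fun a _ => ?_
  rw [sliceAt, card_preimage]
  congr 1
  ext ⟨b, u⟩
  simp [eq_comm]

lemma isIndep_sliceAt {S : Finset (α × β)} (hi : IsIndep (rootedProd G H v) S) (a : α) :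
    IsIndep H (sliceAt S a) := fun u hu w hw hadj =>
  hi (a, u) (mem_sliceAt.1 hu) (a, w) (mem_sliceAt.1 hw) (Or.inr ⟨rfl, hadj⟩)

lemma isDomSetExcept_sliceAt {S : Finset (α × β)} (hd : IsDomSet (rootedProd G H v) S) (a : α) :
    IsDomSetExcept H v (sliceAt S a) := by
  intro u hu huv
  obtain ⟨⟨b, w⟩, hw, ⟨-, hu', -⟩ | ⟨rfl, hadj⟩⟩ := hd (a, u) (by simpa using hu)
  · exact absurd hu' huv
  · exact ⟨w, by simpa using hw, hadj⟩

variable [Fintype α] [Fintype β]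

noncomputable def rootDominatedCopies (H : SimpleGraph β) (v : β) (S : Finset (α × β)) :
    Finset α :=
  univ.filter fun a => v ∈ sliceAt S a ∨ ∃ w ∈ sliceAt S a, H.Adj w v

lemma indepDomNum_le_card_rootDominatedCopies {S : Finset (α × β)}
    (hd : IsDomSet (rootedProd G H v) S) (hi : IsIndep (rootedProd G H v) S) :
    indepDomNum G ≤ (rootDominatedCopies H v S).card := by
  refine indepDomNum_le_card_of_subset (R := univ.filter fun a => v ∈ sliceAt S a)
    (fun a ha => ?_) (fun a ha b hb hab => ?_) (fun a ha => ?_)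
  · simp only [rootDominatedCopies, mem_filter, mem_univ, true_and] at ha ⊢
    exact Or.inl ha
  · simp only [coe_filter, mem_univ, true_and, Set.mem_ofPred_eq, mem_sliceAt] at ha hb
    exact hi (a, v) ha (b, v) hb (Or.inl ⟨rfl, rfl, hab⟩)
  · simp only [rootDominatedCopies, mem_filter, mem_univ, true_and, not_or, not_exists,
      not_and, mem_sliceAt] at ha
    obtain ⟨⟨b, w⟩, hw, ⟨rfl, -, hba⟩ | ⟨rfl, hwv⟩⟩ := hd (a, v) ha.1
    · exact ⟨b, by simpa using hw, hba⟩
    · exact absurd hwv (ha.2 w hw)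

lemma indepDomNum_sub_one_add_le_card_sliceAt [Nonempty β] {S : Finset (α × β)}
    (hd : IsDomSet (rootedProd G H v) S) (hi : IsIndep (rootedProd G H v) S) (a : α) :
    indepDomNum H - 1 + (if a ∈ rootDominatedCopies H v S then 1 else 0) ≤
      (sliceAt S a).card := by
  have hpos := one_le_indepDomNum H
  split_ifs with ha
  · have := indepDomNum_le_card_of_dominates_root (isIndep_sliceAt hi a)
      (isDomSetExcept_sliceAt hd a) (by simpa [rootDominatedCopies] using ha)
    omega
  · have := indepDomNum_le_card_add_one (isIndep_sliceAt hi a) (isDomSetExcept_sliceAt hd a)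
    omega

lemma card_mul_indepDomNum_sub_one_add_le_card [Nonempty β] {S : Finset (α × β)}
    (hd : IsDomSet (rootedProd G H v) S) (hi : IsIndep (rootedProd G H v) S) :
    Fintype.card α * (indepDomNum H - 1) + indepDomNum G ≤ S.card := by
  calc Fintype.card α * (indepDomNum H - 1) + indepDomNum G
      ≤ Fintype.card α * (indepDomNum H - 1) + (rootDominatedCopies H v S).card := by
        grw [indepDomNum_le_card_rootDominatedCopies hd hi]
    _ = ∑ a, (indepDomNum H - 1 + if a ∈ rootDominatedCopies H v S then 1 else 0) := by
        rw [sum_add_distrib, sum_const, card_univ, smul_eq_mul, sum_boole]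
        simp
    _ ≤ ∑ a, (sliceAt S a).card :=
        sum_le_sum fun a _ => indepDomNum_sub_one_add_le_card_sliceAt hd hi a
    _ = S.card := sum_card_sliceAt S

end RootedProduct

section UpperBound

variable {α β : Type*} {G : SimpleGraph α} {H : SimpleGraph β} {v : β} [Fintype α]
  {A : Finset α} {D W : Finset β}

noncomputable def blockSet (A : Finset α) (D W : Finset β) : Finset (α × β) :=
  A ×ˢ D ∪ Aᶜ ×ˢ W

lemma mem_blockSet {p : α × β} :
    p ∈ blockSet A D W ↔ p.1 ∈ A ∧ p.2 ∈ D ∨ p.1 ∉ A ∧ p.2 ∈ W := by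
  simp [blockSet]

lemma card_blockSet :
    (blockSet A D W).card = A.card * D.card + (Fintype.card α - A.card) * W.card := by
  rw [blockSet, card_union_of_disjoint (disjoint_product.2 (Or.inl disjoint_compl_right)),
    card_product, card_product, card_compl]

lemma isIndep_blockSet (hAi : IsIndep G A) (hDi : IsIndep H D) (hWi : IsIndep H W)
    (hvW : v ∉ W) : IsIndep (rootedProd G H v) (blockSet A D W) := by
  rintro ⟨a, u⟩ hp ⟨b, w⟩ hq hadj
  simp only [mem_coe, mem_blockSet] at hp hq
  rcases hadj with ⟨rfl, rfl, hab⟩ | ⟨rfl, huw⟩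
  · exact hAi a (hp.elim And.left fun h => absurd h.2 hvW) b
      (hq.elim And.left fun h => absurd h.2 hvW) hab
  · rcases hp with ⟨ha, hu⟩ | ⟨ha, hu⟩ <;> rcases hq with ⟨ha', hw⟩ | ⟨ha', hw⟩
    · exact hDi u hu w hw huw
    · exact ha' ha
    · exact ha ha'
    · exact hWi u hu w hw huw

lemma isDomSet_blockSet (hAd : IsDomSet G A) (hDd : IsDomSet H D)
    (hWd : IsDomSetExcept H v W) (hv : v ∈ D ∨ ∃ w ∈ W, H.Adj w v) :
    IsDomSet (rootedProd G H v) (blockSet A D W) := by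
  rintro ⟨a, u⟩ hp
  simp only [mem_coe, mem_blockSet, not_or, not_and] at hp
  by_cases ha : a ∈ A
  · obtain ⟨d, hd, hadj⟩ := hDd u (hp.1 ha)
    exact ⟨(a, d), mem_blockSet.2 (Or.inl ⟨ha, hd⟩), Or.inr ⟨rfl, hadj⟩⟩
  by_cases huv : u = v
  · subst huv
    rcases hv with hvD | ⟨w, hw, hadj⟩
    · obtain ⟨b, hb, hab⟩ := hAd a ha
      exact ⟨(b, u), mem_blockSet.2 (Or.inl ⟨hb, hvD⟩), Or.inl ⟨rfl, rfl, hab⟩⟩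
    · exact ⟨(a, w), mem_blockSet.2 (Or.inr ⟨ha, hw⟩), Or.inr ⟨rfl, hadj⟩⟩
  · obtain ⟨w, hw, hadj⟩ := hWd u (hp.2 ha) huv
    exact ⟨(a, w), mem_blockSet.2 (Or.inr ⟨ha, hw⟩), Or.inr ⟨rfl, hadj⟩⟩

end UpperBound

theorem stmt13_general {α β : Type*} [Fintype α] [Fintype β]
    (G : SimpleGraph α) (H : SimpleGraph β) (v : β)
    (hm : 2 ≤ Fintype.card β) :
    Fintype.card α * (indepDomNum H - 1) + indepDomNum G ≤
        indepDomNum (rootedProd G H v) ∧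
    indepDomNum (rootedProd G H v) ≤
      indepDomNum H * indepNum G +
        indepDomNum (deleteVert H v) * (Fintype.card α - indepNum G) := by
  have : Nonempty β := Fintype.card_pos_iff.1 (by omega)
  constructor
  · obtain ⟨S, hd, hi, hS⟩ := exists_isDomSet_isIndep_card_eq_indepDomNum (rootedProd G H v)
    exact hS ▸ card_mul_indepDomNum_sub_one_add_le_card hd hi
  · obtain ⟨A, hAi, hAd, hA⟩ := exists_isIndep_isDomSet_card_eq_indepNum G
    obtain ⟨D, W, hDd, hDi, hD, hvW, hWi, hWd, hW, hv⟩ :=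
      exists_minimal_pair_dominating_root H v
    calc indepDomNum (rootedProd G H v)
        ≤ (blockSet A D W).card := indepDomNum_le_card
          (isDomSet_blockSet hAd hDd hWd hv) (isIndep_blockSet hAi hDi hWi hvW)
      _ = _ := by rw [card_blockSet, hA, hD, hW, mul_comm, mul_comm (Fintype.card α - _)]

/-- `n·(i(H) − 1) + i(G) ≤ i(G∘H) ≤ i(H)·α(G) + i(H − v)·(n − α(G))`. -/
theorem stmt13 {α β : Type*} [Fintype α] [Fintype β]
    (G : SimpleGraph α) (H : SimpleGraph β) (v : β)
    (hn : 2 ≤ Fintype.card α) (hm : 2 ≤ Fintype.card β) :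
    Fintype.card α * (indepDomNum H - 1) + indepDomNum G ≤
        indepDomNum (rootedProd G H v) ∧
    indepDomNum (rootedProd G H v) ≤
      indepDomNum H * indepNum G +
        indepDomNum (deleteVert H v) * (Fintype.card α - indepNum G) :=
  stmt13_general G H v hm
end

section
/- Let G be a graph of order n ≥ 2 and let H be a graph with root vertex v and at least two vertices. If v does not belong to any minimum independent dominating set of H, then i(G∘H) = n·i(H). -/
open Finset
open scoped Classical

/-!
Copies of `H` in `G ∘ H` interact only through edges between roots. Placing a minimum
independent dominating set of `H`, which avoids `v`, in every copy therefore gives an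
independent dominating set of `G ∘ H` of size `n · i(H)`. Conversely, an independent dominating
set `D` of `G ∘ H` meets each copy in an independent set of `H` dominating every vertex except
possibly the root. If it misses the root, adding the root yields an independent dominating set
of `H` containing `v`, which by hypothesis has more than `i(H)` vertices; either way `D` has at
least `i(H)` vertices in each copy.
-/

section IndependentDomination

variable {α : Type*} {G : SimpleGraph α}

lemma isIndep_insert {S : Set α} {w : α} :
    IsIndep G (insert w S) ↔ IsIndep G S ∧ ∀ u ∈ S, ¬ G.Adj w u := by
  constructor
  · intro h
    exact ⟨fun u hu x hx => h u (Or.inr hu) x (Or.inr hx),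
      fun u hu => h w (Or.inl rfl) u (Or.inr hu)⟩
  · rintro ⟨hS, hw⟩ u (rfl | hu) x (rfl | hx)
    · exact G.loopless.irrefl _
    · exact hw x hx
    · exact fun hadj => hw u hu hadj.symm
    · exact hS u hu x hx

variable [Fintype α]

lemma exists_isDomSet_isIndep (G : SimpleGraph α) :
    ∃ S : Finset α, IsDomSet G ↑S ∧ IsIndep G ↑S := by
  obtain ⟨S, hS, hmax⟩ := exists_max_image
    (univ.powerset.filter fun S : Finset α => IsIndep G ↑S) card ⟨∅, by simp [IsIndep]⟩
  rw [mem_filter] at hS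
  refine ⟨S, fun w hw => ?_, hS.2⟩
  by_contra! hnot
  have hwS : w ∉ S := by simpa using hw
  have hins : IsIndep G ↑(insert w S) := by
    rw [coe_insert, isIndep_insert]
    exact ⟨hS.2, fun u hu hadj => hnot u hu hadj.symm⟩
  have := hmax (insert w S) (by simpa using hins)
  rw [card_insert_of_notMem hwS] at this
  omega

lemma indepDomNum_le_card_s14 {S : Finset α} (hdom : IsDomSet G ↑S) (hind : IsIndep G ↑S) :
    indepDomNum G ≤ S.card :=
  Nat.sInf_le ⟨S, hdom, hind, rfl⟩

lemma exists_card_eq_indepDomNum (G : SimpleGraph α) :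
    ∃ S : Finset α, IsDomSet G ↑S ∧ IsIndep G ↑S ∧ S.card = indepDomNum G := by
  obtain ⟨S, hdom, hind⟩ := exists_isDomSet_isIndep G
  have hne : {k | ∃ S : Finset α, IsDomSet G ↑S ∧ IsIndep G ↑S ∧ S.card = k}.Nonempty :=
    ⟨S.card, S, hdom, hind, rfl⟩
  exact Nat.sInf_mem hne

lemma indepDomNum_le_card_of_dominates_ne {v : α}
    (hv : ∀ S : Finset α, IsDomSet G ↑S → IsIndep G ↑S → S.card = indepDomNum G → v ∉ S)
    {T : Finset α} (hind : IsIndep G ↑T) (hdom : ∀ w ∉ T, w ≠ v → ∃ u ∈ T, G.Adj u w) :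
    indepDomNum G ≤ T.card := by
  by_cases hT : IsDomSet G ↑T
  · exact indepDomNum_le_card_s14 hT hind
  obtain ⟨w, hwT, hwnd⟩ : ∃ w ∉ (T : Set α), ∀ u ∈ T, ¬ G.Adj u w := by
    simpa [IsDomSet] using hT
  obtain rfl : w = v := by
    by_contra hwv
    obtain ⟨u, hu, hadj⟩ := hdom w hwT hwv
    exact hwnd u hu hadj
  have hwT' : w ∉ T := hwT
  have hins_ind : IsIndep G ↑(insert w T) := by
    rw [coe_insert, isIndep_insert]
    exact ⟨hind, fun u hu hadj => hwnd u hu hadj.symm⟩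
  have hins_dom : IsDomSet G ↑(insert w T) := by
    intro x hx
    simp only [coe_insert, Set.mem_insert_iff, not_or] at hx
    obtain ⟨u, hu, hadj⟩ := hdom x hx.2 hx.1
    exact ⟨u, by simp [hu], hadj⟩
  have hle := indepDomNum_le_card_s14 hins_dom hins_ind
  have hne : (insert w T).card ≠ indepDomNum G :=
    fun h => hv _ hins_dom hins_ind h (mem_insert_self w T)
  rw [card_insert_of_notMem hwT'] at hle hne
  omega

end IndependentDomination

section RootedProduct

variable {α β : Type*} {G : SimpleGraph α} {H : SimpleGraph β} {v : β}

lemma rootedProd_adj_mk_left {a : α} {x y : β} :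
    (rootedProd G H v).Adj (a, x) (a, y) ↔ H.Adj x y := by
  simp [rootedProd]

noncomputable def copySlice (D : Finset (α × β)) (a : α) : Finset β :=
  (D.filter fun x => x.1 = a).image Prod.snd

@[simp]
lemma mem_copySlice {D : Finset (α × β)} {a : α} {w : β} : w ∈ copySlice D a ↔ (a, w) ∈ D := by
  simp [copySlice]

lemma isIndep_copySlice {D : Finset (α × β)} (hind : IsIndep (rootedProd G H v) ↑D) (a : α) :
    IsIndep H ↑(copySlice D a) := fun x hx y hy hadj =>
  hind (a, x) (mem_copySlice.1 hx) (a, y) (mem_copySlice.1 hy) (rootedProd_adj_mk_left.2 hadj)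

lemma copySlice_dominates_ne {D : Finset (α × β)} (hdom : IsDomSet (rootedProd G H v) ↑D)
    (a : α) : ∀ w ∉ copySlice D a, w ≠ v → ∃ u ∈ copySlice D a, H.Adj u w := by
  intro w hw hwv
  obtain ⟨⟨b, u⟩, hu, hadj⟩ := hdom (a, w) (by simpa using hw)
  rcases hadj with ⟨-, rfl, -⟩ | ⟨rfl, hadj⟩
  · exact absurd rfl hwv
  · exact ⟨u, mem_copySlice.2 hu, hadj⟩

lemma isDomSet_univ_product [Fintype α] {S : Finset β} (hdom : IsDomSet H ↑S) :
    IsDomSet (rootedProd G H v) ↑(univ ×ˢ S : Finset (α × β)) := by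
  rintro ⟨a, w⟩ hw
  obtain ⟨u, hu, hadj⟩ := hdom w (by simpa using hw)
  exact ⟨(a, u), by simpa using hu, rootedProd_adj_mk_left.2 hadj⟩

/-- Only roots are adjacent across copies, so a set avoiding the root stays independent. -/
lemma isIndep_univ_product [Fintype α] {S : Finset β} (hind : IsIndep H ↑S) (hvS : v ∉ S) :
    IsIndep (rootedProd G H v) ↑(univ ×ˢ S : Finset (α × β)) := by
  rintro ⟨a, x⟩ hx ⟨b, y⟩ hy (⟨rfl, -, -⟩ | ⟨-, hadj⟩)
  · exact hvS (by simpa using hx)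
  · exact hind x (by simpa using hx) y (by simpa using hy) hadj

lemma card_mul_indepDomNum_le [Fintype α] [Fintype β]
    (hv : ∀ S : Finset β, IsDomSet H ↑S → IsIndep H ↑S → S.card = indepDomNum H → v ∉ S)
    {D : Finset (α × β)} (hdom : IsDomSet (rootedProd G H v) ↑D)
    (hind : IsIndep (rootedProd G H v) ↑D) :
    Fintype.card α * indepDomNum H ≤ D.card := calc
  Fintype.card α * indepDomNum H = ∑ _a : α, indepDomNum H := by simp [mul_comm]
  _ ≤ ∑ a : α, (copySlice D a).card := sum_le_sum fun a _ =>
    indepDomNum_le_card_of_dominates_ne hv (isIndep_copySlice hind a)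
      (copySlice_dominates_ne hdom a)
  _ ≤ ∑ a : α, (D.filter fun x => x.1 = a).card := sum_le_sum fun a _ => card_image_le
  _ = D.card := (card_eq_sum_card_fiberwise fun x _ => mem_univ x.1).symm

end RootedProduct

theorem stmt14_general {α β : Type*} [Fintype α] [Fintype β]
    (G : SimpleGraph α) (H : SimpleGraph β) (v : β)
    (hv : ∀ S : Finset β, IsDomSet H ↑S → IsIndep H ↑S → S.card = indepDomNum H → v ∉ S) :
    indepDomNum (rootedProd G H v) = Fintype.card α * indepDomNum H := by
  obtain ⟨S, hdom, hind, hcard⟩ := exists_card_eq_indepDomNum H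
  obtain ⟨D, hDdom, hDind, hDcard⟩ := exists_card_eq_indepDomNum (rootedProd G H v)
  refine le_antisymm ?_ (hDcard ▸ card_mul_indepDomNum_le hv hDdom hDind)
  calc indepDomNum (rootedProd G H v) ≤ (univ ×ˢ S).card :=
        indepDomNum_le_card_s14 (isDomSet_univ_product hdom)
          (isIndep_univ_product hind (hv S hdom hind hcard))
    _ = Fintype.card α * indepDomNum H := by rw [card_product, card_univ, hcard]

/-- if the root `v` belongs to no minimum independent dominating set of `H`,
then `i(G∘H) = n·i(H)`. -/
theorem stmt14 {α β : Type*} [Fintype α] [Fintype β]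
    (G : SimpleGraph α) (H : SimpleGraph β) (v : β)
    (hn : 2 ≤ Fintype.card α) (hm : 2 ≤ Fintype.card β)
    (hv : ∀ S : Finset β, IsDomSet H ↑S → IsIndep H ↑S → S.card = indepDomNum H → v ∉ S) :
    indepDomNum (rootedProd G H v) = Fintype.card α * indepDomNum H :=
  stmt14_general G H v hv
end

section
/- Let G be a graph of order n ≥ 2 and let H be any graph with root vertex v and at least two vertices (with G connected and H connected so that connected dominating sets exist). Then the connected domination number of the rooted product satisfies γ_c(G∘H) ∈ {n·γ_c(H), n·(γ_c(H) + 1)}. -/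
open Finset
open scoped Classical

/-!
Every connected dominating set `D` of `G ∘ H` contains all roots `(a, v)`: each copy of `H` meets
`D`, and a path in `D` between two copies can only leave a copy through its root. Consequently
every slice `{b | (a, b) ∈ D}` is a connected dominating set of `H` containing `v` (project `D`
onto the `a`-th copy, collapsing every other copy to its root). Conversely `univ ×ˢ S` is a
connected dominating set of `G ∘ H` for every such `S`. Hence `γ_c(G ∘ H) = n · γ_c(H, v)`,
where `γ_c(H, v)` is the least size of a connected dominating set containing `v`, and
`γ_c(H) ≤ γ_c(H, v) ≤ γ_c(H) + 1` since adding `v` to a connected dominating set keeps it one.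
-/

namespace SimpleGraph

variable {V W : Type*} {G : SimpleGraph V} {G' : SimpleGraph W}

theorem Reachable.map_of_adj_or_eq (f : V → W)
    (hf : ∀ ⦃x y⦄, G.Adj x y → f x = f y ∨ G'.Adj (f x) (f y)) {x y : V} (h : G.Reachable x y) :
    G'.Reachable (f x) (f y) := by
  rw [reachable_iff_reflTransGen] at h ⊢
  refine Relation.ReflTransGen.lift' f (fun a b hab => ?_) x y h
  change Relation.ReflTransGen G'.Adj (f a) (f b)
  rcases hf hab with heq | hadj
  · rw [heq]
  · exact Relation.ReflTransGen.single hadj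

theorem Connected.of_surjective_of_adj_or_eq (f : V → W) (hsurj : Function.Surjective f)
    (hf : ∀ ⦃x y⦄, G.Adj x y → f x = f y ∨ G'.Adj (f x) (f y)) (hG : G.Connected) :
    G'.Connected := by
  have := hG.nonempty.map f
  refine ⟨fun x y => ?_⟩
  obtain ⟨x, rfl⟩ := hsurj x
  obtain ⟨y, rfl⟩ := hsurj y
  exact (hG x y).map_of_adj_or_eq f hf

end SimpleGraph

open SimpleGraph

section ConnDomSet

variable {α : Type*} {G : SimpleGraph α}

theorem IsConnDomSet.insert {S : Set α} (hS : IsConnDomSet G S) (v : α) :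
    IsConnDomSet G (insert v S) := by
  refine ⟨fun w hw => ?_, ?_⟩
  · obtain ⟨u, hu, huw⟩ := hS.1 w fun h => hw (Set.mem_insert_of_mem v h)
    exact ⟨u, Set.mem_insert_of_mem v hu, huw⟩
  · by_cases hv : v ∈ S
    · rw [Set.insert_eq_of_mem hv]
      exact hS.2
    obtain ⟨u, hu, huv⟩ := hS.1 v hv
    rw [← Set.union_singleton]
    exact connected_induce_union hS.2.preconnected Preconnected.of_subsingleton hu rfl huv

noncomputable def rootedConnDomNum (G : SimpleGraph α) (v : α) : ℕ :=
  sInf {k | ∃ S : Finset α, v ∈ S ∧ IsConnDomSet G S ∧ S.card = k}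

theorem rootedConnDomNum_le_card {v : α} {S : Finset α} (hv : v ∈ S) (hS : IsConnDomSet G S) :
    rootedConnDomNum G v ≤ S.card :=
  Nat.sInf_le ⟨S, hv, hS, rfl⟩

variable [Fintype α]

theorem isConnDomSet_univ (hG : G.Connected) : IsConnDomSet G ↑(Finset.univ : Finset α) := by
  rw [Finset.coe_univ]
  exact ⟨fun _ hx => absurd (Set.mem_univ _) hx, (induceUnivIso G).connected_iff.mpr hG⟩

theorem connDomNum_le_card {S : Finset α} (hS : IsConnDomSet G S) : connDomNum G ≤ S.card :=
  Nat.sInf_le ⟨S, hS, rfl⟩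

theorem exists_isConnDomSet_card_eq_connDomNum {S : Finset α} (hS : IsConnDomSet G S) :
    ∃ D : Finset α, IsConnDomSet G D ∧ D.card = connDomNum G :=
  Nat.sInf_mem (s := {k | ∃ D : Finset α, IsConnDomSet G D ∧ D.card = k}) ⟨S.card, S, hS, rfl⟩

theorem exists_isConnDomSet_card_eq_rootedConnDomNum (hG : G.Connected) (v : α) :
    ∃ S : Finset α, v ∈ S ∧ IsConnDomSet G S ∧ S.card = rootedConnDomNum G v :=
  Nat.sInf_mem (s := {k | ∃ S : Finset α, v ∈ S ∧ IsConnDomSet G S ∧ S.card = k})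
    ⟨_, Finset.univ, Finset.mem_univ v, isConnDomSet_univ hG, rfl⟩

theorem connDomNum_le_rootedConnDomNum (hG : G.Connected) (v : α) :
    connDomNum G ≤ rootedConnDomNum G v := by
  obtain ⟨S, -, hS, hcard⟩ := exists_isConnDomSet_card_eq_rootedConnDomNum hG v
  exact hcard ▸ connDomNum_le_card hS

theorem rootedConnDomNum_le_connDomNum_add_one (hG : G.Connected) (v : α) :
    rootedConnDomNum G v ≤ connDomNum G + 1 := by
  obtain ⟨S, hS, hcard⟩ := exists_isConnDomSet_card_eq_connDomNum (isConnDomSet_univ hG)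
  calc rootedConnDomNum G v ≤ (insert v S).card :=
        rootedConnDomNum_le_card (Finset.mem_insert_self v S) (by simpa using hS.insert v)
    _ ≤ connDomNum G + 1 := hcard ▸ Finset.card_insert_le v S

end ConnDomSet

theorem Finset.card_eq_sum_card_slices {α β : Type*} [Fintype α] [Fintype β]
    (D : Finset (α × β)) : D.card = ∑ a, (Finset.univ.filter fun b => (a, b) ∈ D).card := by
  simp only [Finset.card_filter]
  rw [← Fintype.sum_prod_type' (fun a b => if (a, b) ∈ D then 1 else 0)]
  simp

section RootedProd

variable {α β : Type*} {G : SimpleGraph α} {H : SimpleGraph β} {v : β}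

theorem isConnDomSet_rootedProd_univ_prod (hG : G.Connected) {S : Set β} (hv : v ∈ S)
    (hS : IsConnDomSet H S) : IsConnDomSet (rootedProd G H v) (Set.univ ×ˢ S) := by
  refine ⟨fun x hx => ?_, ?_⟩
  · obtain ⟨u, hu, hadj⟩ := hS.1 x.2 fun h => hx ⟨Set.mem_univ _, h⟩
    exact ⟨(x.1, u), ⟨Set.mem_univ _, hu⟩, Or.inr ⟨rfl, hadj⟩⟩
  obtain ⟨a₀⟩ := hG.nonempty
  let copy (a : α) : H.induce S →g (rootedProd G H v).induce (Set.univ ×ˢ S) :=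
    ⟨fun b => ⟨(a, b), Set.mem_univ _, b.2⟩, fun h => Or.inr ⟨rfl, h⟩⟩
  let roots : G →g (rootedProd G H v).induce (Set.univ ×ˢ S) :=
    ⟨fun a => ⟨(a, v), Set.mem_univ _, hv⟩, fun h => Or.inl ⟨rfl, rfl, h⟩⟩
  have reach_root (x : ↥(Set.univ ×ˢ S)) :
      ((rootedProd G H v).induce (Set.univ ×ˢ S)).Reachable x (roots a₀) :=
    ((hS.2 ⟨x.1.2, x.2.2⟩ ⟨v, hv⟩).map (copy x.1.1)).trans ((hG x.1.1 a₀).map roots)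
  exact connected_iff_exists_forall_reachable _ |>.mpr ⟨roots a₀, fun x => (reach_root x).symm⟩

variable [Nontrivial α] [Nontrivial β]

theorem IsConnDomSet.rootedProd_root_mem {D : Set (α × β)}
    (hD : IsConnDomSet (rootedProd G H v) D) (a : α) : (a, v) ∈ D := by
  have meets_copy (a' : α) : ∃ b, (a', b) ∈ D := by
    obtain ⟨b, hb⟩ := exists_ne v
    by_cases h : (a', b) ∈ D
    · exact ⟨b, h⟩
    obtain ⟨⟨a'', b'⟩, hu, ⟨-, hbv, -⟩ | ⟨rfl, -⟩⟩ := hD.1 _ h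
    · exact absurd hbv hb
    · exact ⟨b', hu⟩
  obtain ⟨a', ha'⟩ := exists_ne a
  obtain ⟨b, hb⟩ := meets_copy a
  obtain ⟨b', hb'⟩ := meets_copy a'
  obtain ⟨W⟩ := hD.2.preconnected ⟨(a, b), hb⟩ ⟨(a', b'), hb'⟩
  obtain ⟨⟨⟨⟨⟨a₁, b₁⟩, hx⟩, ⟨⟨a₂, b₂⟩, _⟩⟩, hadj⟩, _, hd₁, hd₂⟩ :=
    W.exists_boundary_dart {x | x.1.1 = a} rfl ha'
  change a₁ = a at hd₁
  change a₂ ≠ a at hd₂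
  rcases hadj with ⟨hb₁, -, -⟩ | ⟨h, -⟩
  · exact hd₁ ▸ hb₁ ▸ hx
  · exact absurd ((show a₁ = a₂ from h) ▸ hd₁) hd₂

theorem IsConnDomSet.rootedProd_slice {D : Set (α × β)}
    (hD : IsConnDomSet (rootedProd G H v) D) (a : α) : IsConnDomSet H (Prod.mk a ⁻¹' D) := by
  refine ⟨fun b hb => ?_, ?_⟩
  · have hbv : b ≠ v := fun h => hb (h ▸ hD.rootedProd_root_mem a)
    obtain ⟨⟨a', b'⟩, hu, ⟨-, hv, -⟩ | ⟨rfl, hadj⟩⟩ := hD.1 _ hb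
    · exact absurd hv hbv
    · exact ⟨b', hu, hadj⟩
  let proj (x : D) : Prod.mk a ⁻¹' D :=
    ⟨if x.1.1 = a then x.1.2 else v, by
      split_ifs with h
      · exact h ▸ x.2
      · exact hD.rootedProd_root_mem a⟩
  refine hD.2.of_surjective_of_adj_or_eq proj (fun b => ⟨⟨(a, b.1), b.2⟩, by simp [proj]⟩) ?_
  rintro ⟨⟨a₁, b₁⟩, _⟩ ⟨⟨a₂, b₂⟩, _⟩ (⟨hb₁, hb₂, -⟩ | ⟨ha, hadj⟩)
  · change b₁ = v at hb₁
    change b₂ = v at hb₂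
    exact Or.inl (Subtype.ext (by simp [proj, hb₁, hb₂]))
  · change a₁ = a₂ at ha
    subst ha
    by_cases ha₁ : a₁ = a
    · exact Or.inr (by simpa [proj, ha₁] using hadj)
    · exact Or.inl (Subtype.ext (by simp [proj, ha₁]))

variable [Fintype α] [Fintype β]

theorem connDomNum_rootedProd (hG : G.Connected) (hH : H.Connected) :
    connDomNum (rootedProd G H v) = Fintype.card α * rootedConnDomNum H v := by
  obtain ⟨S, hv, hS, hScard⟩ := exists_isConnDomSet_card_eq_rootedConnDomNum hH v
  have hprod : IsConnDomSet (rootedProd G H v) ↑(Finset.univ ×ˢ S : Finset (α × β)) := by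
    simpa using isConnDomSet_rootedProd_univ_prod hG hv hS
  refine le_antisymm ?_ ?_
  · simpa [hScard] using connDomNum_le_card hprod
  obtain ⟨D, hD, hDcard⟩ := exists_isConnDomSet_card_eq_connDomNum hprod
  have slice_le (a : α) : rootedConnDomNum H v ≤ (Finset.univ.filter fun b => (a, b) ∈ D).card :=
    rootedConnDomNum_le_card (by simpa using hD.rootedProd_root_mem a)
      (by simpa [Set.preimage] using hD.rootedProd_slice a)
  calc Fintype.card α * rootedConnDomNum H v = ∑ _a : α, rootedConnDomNum H v := by simp
    _ ≤ _ := Finset.sum_le_sum fun a _ => slice_le a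
    _ = connDomNum (rootedProd G H v) := by rw [← hDcard, Finset.card_eq_sum_card_slices]

end RootedProd

/-- for connected `G` and `H`,
`γ_c(G∘H) ∈ {n·γ_c(H), n·(γ_c(H)+1)}`. -/
theorem stmt16 {α β : Type*} [Fintype α] [Fintype β]
    (G : SimpleGraph α) (H : SimpleGraph β) (v : β)
    (hG : G.Connected) (hH : H.Connected)
    (hn : 2 ≤ Fintype.card α) (hm : 2 ≤ Fintype.card β) :
    connDomNum (rootedProd G H v) ∈
      ({Fintype.card α * connDomNum H,
        Fintype.card α * (connDomNum H + 1)} : Set ℕ) := by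
  have := Fintype.one_lt_card_iff_nontrivial.mp hn
  have := Fintype.one_lt_card_iff_nontrivial.mp hm
  rw [connDomNum_rootedProd hG hH]
  have hlow := connDomNum_le_rootedConnDomNum hH v
  have hup := rootedConnDomNum_le_connDomNum_add_one hH v
  obtain h | h : rootedConnDomNum H v = connDomNum H ∨
      rootedConnDomNum H v = connDomNum H + 1 := by omega
  all_goals simp [h]
end
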